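/- Fix τ ∈ K, char K = 0, let ω be the compositional inverse of x(1-x)^τ and y = 1/(1-(1+τ)ω). Then (1+τ)²·x·ω'(x) = τy - τ + (1+τ)ω as formal power series in K[[x]]. -/

import Mathlib

/-!
Write `A_n(a) = a/(a+nb)·binom(a+nb, n)` for the Rothe–Hagen coefficients and
`R_a = ∑ A_n(a) xⁿ`. The Pascal rule `A_{n+1}(a+1) = A_{n+1}(a) + A_n(a+b)` reads
`R_{a+1} = R_a + x R_{a+b}`; together with `R_0 = 1` and the polynomial dependence on `a` it
gives the convolution `R_a R_c = R_{a+c}`. With `b = 1+τ` one has `ω = 1 - R_{-1}`, hence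
`ω(1-ω) = R_{-1} - R_{-2}`, and the elementary relation between the coefficients of `R_{a-1}`
and `R_a`, taken at `a = -1` and combined with `R_{-2} = R_{-1}²`, becomes the equation
`x ω' (1 - (1+τ)ω) = ω(1-ω)`. Dividing by the unit `1 - (1+τ)ω` gives the claim.
-/

open PowerSeries Finset

variable {K : Type*} [Field K]

/-- The compositional inverse `ω(x) = ∑_{n≥1} (∏_{a=0}^{n-2}(nτ+a)/n!) x^n`
of `x(1-x)^τ`. -/
noncomputable def omegaSeries [CharZero K] (τ : K) : PowerSeries K :=
  PowerSeries.mk fun n =>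
    if n = 0 then 0 else (∏ a ∈ Finset.range (n - 1), ((n : K) * τ + a)) / (n.factorial : K)

theorem PowerSeries.coeff_X_mul_derivative {R : Type*} [CommSemiring R] (f : R⟦X⟧) (n : ℕ) :
    coeff n (X * d⁄dX R f) = n * coeff n f := by
  cases n with
  | zero => simp
  | succ n => rw [coeff_succ_X_mul, coeff_derivative, mul_comm]; push_cast; rfl

theorem Polynomial.eq_zero_of_eval_add_one_eq {R : Type*} [CommRing R] [IsDomain R] [CharZero R]
    {p : Polynomial R} (h0 : p.eval 0 = 0) (hp : ∀ n : ℕ, p.eval ((n : R) + 1) = p.eval (n : R)) :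
    p = 0 := by
  have hroot (n : ℕ) : p.IsRoot (n : R) := by
    induction n with
    | zero => simpa using h0
    | succ n ih => simpa [Polynomial.IsRoot, hp] using ih
  exact p.eq_zero_of_infinite_isRoot <|
    Set.infinite_of_injective_forall_mem Nat.cast_injective hroot

theorem ascPochhammer_eval_eq_prod_range {R : Type*} [CommSemiring R] (n : ℕ) (r : R) :
    (ascPochhammer R n).eval r = ∏ j ∈ range n, (r + j) := by
  induction n with
  | zero => simp
  | succ n ih => rw [ascPochhammer_succ_eval, ih, prod_range_succ]

theorem ascPochhammer_succ_eval_sub_one {R : Type*} [CommRing R] (n : ℕ) (r : R) :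
    (ascPochhammer R (n + 1)).eval (r - 1) = (r - 1) * (ascPochhammer R n).eval r := by
  simp [ascPochhammer_succ_left]

/-- `A_n(a) = a/(a+nb)·binom(a+nb, n)`, as a polynomial in `a`. -/
noncomputable def rothePoly (b : K) : ℕ → Polynomial K
  | 0 => 1
  | n + 1 => Polynomial.C ((n + 1).factorial : K)⁻¹ *
      (Polynomial.X * (ascPochhammer K n).comp (Polynomial.X + Polynomial.C ((n + 1) * b - n)))

noncomputable def rotheSeries (b a : K) : K⟦X⟧ :=
  mk fun n => (rothePoly b n).eval a

section Rothe

variable (b a : K)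

@[simp] theorem constantCoeff_rotheSeries : constantCoeff (rotheSeries b a) = 1 := by
  simp [rotheSeries, rothePoly]

theorem coeff_rotheSeries_succ (n : ℕ) : coeff (n + 1) (rotheSeries b a) =
    a * (ascPochhammer K n).eval (a + (n + 1) * b - n) / (n + 1).factorial := by
  simp only [rotheSeries, rothePoly, coeff_mk, Polynomial.eval_mul, Polynomial.eval_C,
    Polynomial.eval_X, Polynomial.eval_comp, Polynomial.eval_add]
  ring_nf

theorem rotheSeries_zero_right : rotheSeries b 0 = 1 := by
  ext (_ | n) <;> simp [coeff_rotheSeries_succ, coeff_one]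

theorem rotheSeries_add_one [CharZero K] :
    rotheSeries b (a + 1) = rotheSeries b a + X * rotheSeries b (a + b) := by
  ext (_ | _ | m)
  · simp
  · simp [coeff_rotheSeries_succ]
  obtain ⟨z, hz⟩ : ∃ z, a + (m + 2) * b - m = z := ⟨_, rfl⟩
  have h₁ : a + 1 + ((m + 1 : ℕ) + 1) * b - (m + 1 : ℕ) = z := by
    push_cast; linear_combination hz
  have h₂ : a + ((m + 1 : ℕ) + 1) * b - (m + 1 : ℕ) = z - 1 := by
    push_cast; linear_combination hz
  have h₃ : a + b + (m + 1) * b - m = z := by linear_combination hz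
  rw [map_add, coeff_succ_X_mul, coeff_rotheSeries_succ, coeff_rotheSeries_succ,
    coeff_rotheSeries_succ, h₁, h₂, h₃, ascPochhammer_succ_eval, ascPochhammer_succ_eval_sub_one,
    Nat.factorial_succ (m + 1)]
  subst hz
  have hm : (m + 1 + 1 : K) ≠ 0 := by exact_mod_cast (m + 1).succ_ne_zero
  have hf : ((m + 1).factorial : K) ≠ 0 := by exact_mod_cast (m + 1).factorial_ne_zero
  push_cast
  field_simp
  ring

theorem rotheSeries_mul [CharZero K] (c : K) :
    rotheSeries b a * rotheSeries b c = rotheSeries b (a + c) := by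
  ext n
  induction n generalizing a with
  | zero => simp
  | succ n ih =>
    suffices h : ∀ x, coeff (n + 1) (rotheSeries b x * rotheSeries b c - rotheSeries b (x + c)) = 0
      from sub_eq_zero.mp (by simpa using h a)
    -- a polynomial in `x` that vanishes at `0` and, by induction, is `1`-periodic
    let p : Polynomial K := ∑ q ∈ antidiagonal (n + 1),
        rothePoly b q.1 * Polynomial.C (coeff q.2 (rotheSeries b c)) -
      (rothePoly b (n + 1)).comp (Polynomial.X + Polynomial.C c)
    have hp (x : K) :
        p.eval x = coeff (n + 1) (rotheSeries b x * rotheSeries b c - rotheSeries b (x + c)) := by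
      simp [p, coeff_mul, rotheSeries, Polynomial.eval_finsetSum, Polynomial.eval_comp]
    have h0 : p.eval 0 = 0 := by simp [hp, rotheSeries_zero_right]
    have hperiodic (x : K) : p.eval (x + 1) = p.eval x := by
      rw [hp, hp, rotheSeries_add_one, add_right_comm, rotheSeries_add_one, add_right_comm x c b,
        show ∀ f g h k l : K⟦X⟧, (f + X * g) * h - (k + X * l) = f * h - k + X * (g * h - l) by
        intros; ring, map_add, coeff_succ_X_mul, map_sub (coeff n), ih, sub_self, add_zero]
    simp [← hp, Polynomial.eq_zero_of_eval_add_one_eq h0 fun n => hperiodic n]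

theorem rotheSeries_sub_one :
    C a * (C (a - 1) * rotheSeries b (a - 1) + C b * (X * d⁄dX K (rotheSeries b (a - 1)))) =
      C (a - 1) * (C a * rotheSeries b a + C (b - 1) * (X * d⁄dX K (rotheSeries b a))) := by
  ext (_ | m)
  · simp; ring
  obtain ⟨z, hz⟩ : ∃ z, a + (m + 1) * b - m = z := ⟨_, rfl⟩
  have hz' : a - 1 + (m + 1) * b - m = z - 1 := by linear_combination hz
  have key :
      (ascPochhammer K m).eval (z - 1) * (z - 1 + m) = (z - 1) * (ascPochhammer K m).eval z := by
    rw [← ascPochhammer_succ_eval, ascPochhammer_succ_eval_sub_one]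
  simp only [coeff_C_mul, map_add, coeff_X_mul_derivative, coeff_rotheSeries_succ, hz, hz']
  subst hz
  push_cast
  linear_combination (a * (a - 1) / (m + 1).factorial) * key

end Rothe

theorem omegaSeries_eq_one_sub_rotheSeries [CharZero K] (τ : K) :
    omegaSeries τ = 1 - rotheSeries (1 + τ) (-1) := by
  ext (_ | m)
  · simp [omegaSeries]
  have harg : -1 + ((m : K) + 1) * (1 + τ) - m = (m + 1 : ℕ) * τ := by push_cast; ring
  simp only [omegaSeries, coeff_mk, map_sub, coeff_one, coeff_rotheSeries_succ, harg,
    ascPochhammer_eval_eq_prod_range]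
  simp [neg_div]

theorem omegaSeries_ode [CharZero K] (τ : K) :
    X * d⁄dX K (omegaSeries τ) * (1 - C (1 + τ) * omegaSeries τ) =
      omegaSeries τ - omegaSeries τ ^ 2 := by
  have hshift := rotheSeries_sub_one (1 + τ) (-1)
  rw [show (-1 : K) - 1 = -1 + -1 by ring, ← rotheSeries_mul, ← sq, Derivation.leibniz_pow]
    at hshift
  rw [omegaSeries_eq_one_sub_rotheSeries, map_sub, Derivation.map_one_eq_zero]
  have h2 : (2 : K⟦X⟧) ≠ 0 := fun h => by
    simpa [map_ofNat] using congrArg constantCoeff h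
  apply mul_left_cancel₀ h2
  simp only [map_neg, map_add, map_one, map_sub, smul_eq_mul, nsmul_eq_mul] at hshift ⊢
  linear_combination hshift

/-- With `y = 1/(1-(1+τ)ω)`, one has `(1+τ)²·x·ω'(x) = τy - τ + (1+τ)ω`. -/
theorem sq_one_add_tau_x_deriv_omega [CharZero K] (τ : K) :
    PowerSeries.C ((1 + τ) ^ 2) *
        (PowerSeries.X * PowerSeries.derivativeFun (omegaSeries τ))
      = PowerSeries.C τ * (1 - PowerSeries.C (1 + τ) * omegaSeries τ)⁻¹
          - PowerSeries.C τ + PowerSeries.C (1 + τ) * omegaSeries τ := by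
  change C _ * (X * d⁄dX K (omegaSeries τ)) = _
  have hω : constantCoeff (omegaSeries τ) = 0 := by simp [omegaSeries_eq_one_sub_rotheSeries]
  have hu : constantCoeff (1 - C (1 + τ) * omegaSeries τ) ≠ 0 := by simp [hω]
  apply mul_right_cancel₀ (ne_zero_of_map hu)
  have hode := omegaSeries_ode τ
  have hinv := PowerSeries.inv_mul_cancel _ hu
  simp only [map_pow, map_add, map_one] at hode hinv ⊢
  linear_combination (1 + C τ) ^ 2 * hode - C τ * hinv
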